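/- arXiv:2405.19457 — 3 statements merged into one kernel-verified Lean document; each statement's English description precedes it below -/
import Mathlib

section
/- Genuine Advance (Theorem 5.9 core): Let n, t be naturals with n > 3t and B ⊆ Fin n with |B| ≤ t. Let g1, g2 : Fin n → Option ℕ be two partial witness-timestamp vectors whose domains D1 = {i | g1 i ≠ none} and D2 = {i | g2 i ≠ none} satisfy |D1| ≥ n − t and |D2| ≥ n − t. Suppose (i) for every i ∈ D1 ∩ D2, if g1 i = some v and g2 i = some w then v ≤ w, and (ii) for every i ∈ D1 ∩ D2 with i ∉ B, g1 i ≠ g2 i. Then there exists an index i ∉ B with i ∈ D1 ∩ D2 such that g1 i = some v, g2 i = some w, and v < w. -/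
/-! Two sets of at least `n - t` readers each share at least `n - 2t > t` readers, so they
cannot all be Byzantine. At a shared correct reader both timestamps are defined, the second
is at least the first, and they differ, so it has strictly increased. -/

theorem Finset.card_add_card_le_card_inter_add {α : Type*} [Fintype α] [DecidableEq α]
    (s s' : Finset α) : s.card + s'.card ≤ (s ∩ s').card + Fintype.card α := by
  rw [← Finset.card_union_add_card_inter, add_comm ((s ∪ s').card)]
  exact Nat.add_le_add_left (Finset.card_le_univ _) _

theorem Finset.exists_mem_inter_notMem_of_card_ge {α : Type*} [Fintype α] [DecidableEq α]
    {t : ℕ} (ht : 3 * t < Fintype.card α) {B s s' : Finset α} (hB : B.card ≤ t)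
    (hs : Fintype.card α - t ≤ s.card) (hs' : Fintype.card α - t ≤ s'.card) :
    ∃ i ∈ s ∩ s', i ∉ B := by
  have hinter := Finset.card_add_card_le_card_inter_add s s'
  exact Finset.exists_mem_notMem_of_card_lt_card (by omega)

theorem Option.exists_lt_of_ne {α : Type*} [PartialOrder α] {a b : Option α}
    (ha : a ≠ none) (hb : b ≠ none) (hle : ∀ v w, a = some v → b = some w → v ≤ w)
    (hne : a ≠ b) : ∃ v w, a = some v ∧ b = some w ∧ v < w := by
  obtain ⟨v, rfl⟩ := Option.ne_none_iff_exists'.mp ha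
  obtain ⟨w, rfl⟩ := Option.ne_none_iff_exists'.mp hb
  exact ⟨v, w, rfl, rfl, (hle v w rfl rfl).lt_of_ne fun h => hne (congrArg some h)⟩

/-- Genuine Advance, core of Theorem 5.9: with `n > 3t` and at most `t`
Byzantine readers `B`, for two partial witness-timestamp vectors `g1, g2` defined on at
least `n - t` indices each, if `g2` dominates `g1` on their common domain and correct
readers' entries differ on the common domain, then some correct reader's timestamp
strictly increases from `g1` to `g2`. -/
theorem genuine_advance (n t : ℕ) (hnt : n > 3 * t)
    (B : Finset (Fin n)) (hB : B.card ≤ t)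
    (g1 g2 : Fin n → Option ℕ)
    (D1 : Finset (Fin n)) (hD1 : D1 = Finset.univ.filter (fun i => g1 i ≠ none))
    (D2 : Finset (Fin n)) (hD2 : D2 = Finset.univ.filter (fun i => g2 i ≠ none))
    (hcard1 : D1.card ≥ n - t) (hcard2 : D2.card ≥ n - t)
    (hle : ∀ i ∈ D1 ∩ D2, ∀ v w, g1 i = some v → g2 i = some w → v ≤ w)
    (hne : ∀ i ∈ D1 ∩ D2, i ∉ B → g1 i ≠ g2 i) :
    ∃ i, i ∉ B ∧ i ∈ D1 ∩ D2 ∧ ∃ v w, g1 i = some v ∧ g2 i = some w ∧ v < w := by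
  obtain ⟨i, hi, hiB⟩ := Finset.exists_mem_inter_notMem_of_card_ge (s := D1) (s' := D2)
    (by rwa [Fintype.card_fin]) hB (by rwa [Fintype.card_fin]) (by rwa [Fintype.card_fin])
  have hi1 : g1 i ≠ none := by simpa [hD1] using (Finset.mem_inter.mp hi).1
  have hi2 : g2 i ≠ none := by simpa [hD2] using (Finset.mem_inter.mp hi).2
  exact ⟨i, hiB, hi, Option.exists_lt_of_ne hi1 hi2 (hle i hi) (hne i hi hiB)⟩
end

section
/- The consistent timestamps form a sublattice: Fix n and a set S of vector timestamps in Fin n → ℕ. Call T : Fin n → ℕ consistent if there is no s ∈ S such that (∃ i, T i < s i) and (∃ j, s j < T j). Then the set of consistent timestamps is closed under pointwise maximum and pointwise minimum: if T1 and T2 are consistent, so are (fun i => max (T1 i) (T2 i)) and (fun i => min (T1 i) (T2 i)). -/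
/-! Being concurrent with `s` means being incomparable with `s` in the product order, so the
consistent timestamps are the intersection, over `s ∈ S`, of the sets of elements comparable
with `s`; each of these is a sublattice. -/

/-- A vector timestamp `T` is consistent with respect to a set `S` of vector timestamps
if it is concurrent with no element of `S`. -/
def Consistent {n : ℕ} (S : Set (Fin n → ℕ)) (T : Fin n → ℕ) : Prop :=
  ¬ ∃ s ∈ S, (∃ i, T i < s i) ∧ (∃ j, s j < T j)

lemma isSublattice_setOf_le_or_ge {α : Type*} [Lattice α] (s : α) :
    IsSublattice {x | x ≤ s ∨ s ≤ x} where
  supClosed := by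
    rintro a (ha | ha) b (hb | hb)
    · exact .inl (sup_le ha hb)
    · exact .inr (le_sup_of_le_right hb)
    all_goals exact .inr (le_sup_of_le_left ha)
  infClosed := by
    rintro a (ha | ha) b (hb | hb)
    · exact .inl (inf_le_of_left_le ha)
    · exact .inl (inf_le_of_left_le ha)
    · exact .inl (inf_le_of_right_le hb)
    · exact .inr (le_inf ha hb)

lemma Pi.not_le_iff_exists_lt {ι α : Type*} [LinearOrder α] {a b : ι → α} :
    ¬ b ≤ a ↔ ∃ i, a i < b i := by
  simp only [Pi.le_def, not_forall, not_le]

lemma consistent_iff {n : ℕ} {S : Set (Fin n → ℕ)} {T : Fin n → ℕ} :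
    Consistent S T ↔ ∀ s ∈ S, T ≤ s ∨ s ≤ T := by
  simp only [Consistent, ← Pi.not_le_iff_exists_lt]
  push Not
  exact forall₂_congr fun _ _ => or_iff_not_imp_right.symm

lemma isSublattice_setOf_consistent {n : ℕ} (S : Set (Fin n → ℕ)) :
    IsSublattice {T | Consistent S T} := by
  have hS : {T | Consistent S T} = ⋂ s ∈ S, {T | T ≤ s ∨ s ≤ T} := by
    ext T
    simp [consistent_iff]
  rw [hS]
  exact isSublattice_iInter fun s => isSublattice_iInter fun _ => isSublattice_setOf_le_or_ge s

/-- The consistent timestamps are closed under pointwise maximum and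
pointwise minimum (they form a sublattice). -/
theorem consistent_sublattice {n : ℕ} (S : Set (Fin n → ℕ)) (T1 T2 : Fin n → ℕ)
    (h1 : Consistent S T1) (h2 : Consistent S T2) :
    Consistent S (fun i => max (T1 i) (T2 i)) ∧
      Consistent S (fun i => min (T1 i) (T2 i)) :=
  ⟨(isSublattice_setOf_consistent S).supClosed h1 h2,
    (isSublattice_setOf_consistent S).infClosed h1 h2⟩
end

section
/- Chain of completions (Theorem 5.17, isomorphism of (𝒯̄,↦) and (𝒯^f,<)): Let g : ℕ → (Fin n → Option ℕ) be a sequence of partial timestamp vectors and define full vectors f : ℕ → (Fin n → ℕ) recursively by f 0 i = (g 0 i).getD 0 and f (k+1) i = (g (k+1) i).getD (f k i). Suppose for every k: (i) for all i and v, g (k+1) i = some v implies f k i ≤ v, and (ii) there exist i and v with g (k+1) i = some v and f k i < v. Then f is strictly monotone with respect to the pointwise strict order: for all j < k, f j ≤ f k pointwise and f j ≠ f k. Consequently f is injective and the set { f k | k ∈ ℕ } is totally ordered under the pointwise order. -/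
/-!
A completion step keeps every entry at least as large (hypothesis (i)) and raises one entry
strictly (hypothesis (ii)), so consecutive completions are strictly increasing in the product
order; a strictly monotone sequence indexed by `ℕ` is injective and its range is a chain.
-/

theorem Option.le_getD_of_forall_eq_some_le {α : Type*} [Preorder α] {o : Option α} {a : α}
    (h : ∀ v, o = some v → a ≤ v) : a ≤ o.getD a := by
  cases o with
  | none => exact le_rfl
  | some v => exact h v rfl

section Completion

variable {ι α : Type*} [Preorder α] {g : ℕ → ι → Option α} {f : ℕ → ι → α}

theorem completion_lt_succ (hfs : ∀ k i, f (k + 1) i = (g (k + 1) i).getD (f k i))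
    (hdom : ∀ k i v, g (k + 1) i = some v → f k i ≤ v)
    (hstrict : ∀ k, ∃ i v, g (k + 1) i = some v ∧ f k i < v) (k : ℕ) :
    f k < f (k + 1) := by
  refine Pi.lt_def.2 ⟨fun i => ?_, ?_⟩
  · rw [hfs]
    exact Option.le_getD_of_forall_eq_some_le (hdom k i)
  · obtain ⟨i, v, hgv, hlt⟩ := hstrict k
    exact ⟨i, by rwa [hfs, hgv, Option.getD_some]⟩

theorem strictMono_completion (hfs : ∀ k i, f (k + 1) i = (g (k + 1) i).getD (f k i))
    (hdom : ∀ k i v, g (k + 1) i = some v → f k i ≤ v)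
    (hstrict : ∀ k, ∃ i v, g (k + 1) i = some v ∧ f k i < v) :
    StrictMono f :=
  strictMono_nat_of_lt_succ (completion_lt_succ hfs hdom hstrict)

end Completion

theorem chain_of_completions_general {n : ℕ}
    (g : ℕ → (Fin n → Option ℕ)) (f : ℕ → (Fin n → ℕ))
    (hfs : ∀ k i, f (k + 1) i = (g (k + 1) i).getD (f k i))
    (hdom : ∀ k i v, g (k + 1) i = some v → f k i ≤ v)
    (hstrict : ∀ k, ∃ i v, g (k + 1) i = some v ∧ f k i < v) :
    (∀ j k, j < k → (∀ i, f j i ≤ f k i) ∧ f j ≠ f k) ∧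
      Function.Injective f ∧
      (∀ a b : ℕ, (∀ i, f a i ≤ f b i) ∨ (∀ i, f b i ≤ f a i)) := by
  have hf : StrictMono f := strictMono_completion hfs hdom hstrict
  refine ⟨fun j k hjk => ⟨(hf hjk).le, (hf hjk).ne⟩, hf.injective, fun a b => ?_⟩
  exact (le_total a b).imp (fun h => hf.monotone h) (fun h => hf.monotone h)

/-- Chain of completions, Theorem 5.17: the recursive completions of a
`↦`-increasing sequence of partial timestamps form a strictly increasing chain of full
timestamps; consequently the completion map is injective and its range is totally
ordered under the pointwise order. -/
theorem chain_of_completions {n : ℕ}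
    (g : ℕ → (Fin n → Option ℕ)) (f : ℕ → (Fin n → ℕ))
    (hf0 : ∀ i, f 0 i = (g 0 i).getD 0)
    (hfs : ∀ k i, f (k + 1) i = (g (k + 1) i).getD (f k i))
    (hdom : ∀ k i v, g (k + 1) i = some v → f k i ≤ v)
    (hstrict : ∀ k, ∃ i v, g (k + 1) i = some v ∧ f k i < v) :
    (∀ j k, j < k → (∀ i, f j i ≤ f k i) ∧ f j ≠ f k) ∧
      Function.Injective f ∧
      (∀ a b : ℕ, (∀ i, f a i ≤ f b i) ∨ (∀ i, f b i ≤ f a i)) :=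
  chain_of_completions_general g f hfs hdom hstrict
end
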